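/- Fix N ≥ 1, d ≥ 1, m > 0, α = 3/2, and a potential W : ℤ^{Nd} → ℝ; let H be the lattice Schrödinger operator (HΨ)(x) = Σ_{y : ‖y−x‖₁=1} Ψ(y) + W(x)Ψ(x) on ℤ^{Nd}. Let Ψ : ℤ^{Nd} → ℂ be polynomially bounded (|Ψ(x)| ≤ C_Ψ (1+‖x‖)^A for some A < ∞), not identically zero, and satisfy HΨ = EΨ pointwise for some E ∈ ℝ. Let u ∈ ℤ^{Nd} be any point with Ψ(u) ≠ 0. Then the set of integers L with ‖u‖ ≤ L^{1/α} such that the cube C_L(0) is (E,m)-non-singular is finite; equivalently, there exists L₁ such that C_L(0) is (E,m)-singular for every L ≥ L₁. -/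

import Mathlib

open scoped BigOperators ENNReal
open MeasureTheory

namespace MPLoc

/-- Configurations of `N` particles in `ℤ^d`. -/
abbrev Conf (N d : ℕ) := Fin N × Fin d → ℤ

/-- Max-norm on `ℤ^ι`. -/
def supNorm {ι : Type*} [Fintype ι] (x : ι → ℤ) : ℕ :=
  Finset.univ.sup fun i => (x i).natAbs

/-- ℓ¹-norm on `ℤ^ι`. -/
def l1Norm {ι : Type*} [Fintype ι] (x : ι → ℤ) : ℕ :=
  ∑ i, (x i).natAbs

/-- The cube `C_L(u) = {x : ‖x - u‖_∞ ≤ L}`. -/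
noncomputable def cube {ι : Type*} [Fintype ι] [DecidableEq ι] (u : ι → ℤ) (L : ℕ) :
    Finset (ι → ℤ) :=
  Finset.Icc (fun i => u i - L) (fun i => u i + L)

/-- The finite-volume Hamiltonian with Dirichlet boundary conditions on `Λ`,
as a matrix: nearest-neighbour hopping plus multiplication by `W`. -/
noncomputable def hamMatrix {ι : Type*} [Fintype ι] [DecidableEq ι]
    (W : (ι → ℤ) → ℝ) (Λ : Finset (ι → ℤ)) : Matrix Λ Λ ℂ :=
  fun x y => (if l1Norm (x.1 - y.1) = 1 then 1 else 0) +
    (if x = y then (W x.1 : ℂ) else 0)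

/-- `z` is an eigenvalue of the matrix `A`. -/
def IsEV {n : Type*} [Fintype n] [DecidableEq n] (A : Matrix n n ℂ) (z : ℂ) : Prop :=
  ∃ v : n → ℂ, v ≠ 0 ∧ A.mulVec v = z • v

/-- Green function `G_Λ(x, y; ζ)` of the finite-volume Hamiltonian. -/
noncomputable def green {ι : Type*} [Fintype ι] [DecidableEq ι]
    (W : (ι → ℤ) → ℝ) (Λ : Finset (ι → ℤ)) (ζ : ℂ) (x y : ι → ℤ) : ℂ :=
  if hx : x ∈ Λ then
    if hy : y ∈ Λ then ((hamMatrix W Λ - ζ • (1 : Matrix Λ Λ ℂ))⁻¹) ⟨x, hx⟩ ⟨y, hy⟩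
    else 0
  else 0

/-- `γ(m, L, n) = m L (1 + L^{-1/4})^{N - n + 1}`. -/
noncomputable def gammaExp (m : ℝ) (L : ℕ) (N n : ℕ) : ℝ :=
  m * L * (1 + (L : ℝ) ^ (-(1 : ℝ) / 4)) ^ (N - n + 1)

/-- The cube `C_L(u) ⊂ ℤ^{Nd}` is `(E,m)`-non-singular. -/
noncomputable def NonSingular {ι : Type*} [Fintype ι] [DecidableEq ι] (N : ℕ)
    (W : (ι → ℤ) → ℝ) (E m : ℝ) (u : ι → ℤ) (L : ℕ) : Prop :=
  ¬ IsEV (hamMatrix W (cube u L)) (E : ℂ) ∧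
  ∀ x : ι → ℤ, ((supNorm (x - u) : ℝ) ≤ (L : ℝ) ^ ((2 : ℝ) / 3)) →
    ∀ y : ι → ℤ, supNorm (y - u) = L →
      ‖green W (cube u L) (E : ℂ) x y‖ ≤ Real.exp (-(gammaExp m L N N))

/-- Symmetrized distance `d_S(x,y) = min_τ ‖τ(x) - y‖` on `(ℤ^d)^N`. -/
noncomputable def symmDist (N d : ℕ) (x y : Conf N d) : ℤ :=
  Finset.univ.inf' ⟨1, Finset.mem_univ 1⟩ fun τ : Equiv.Perm (Fin N) =>
    supNorm (fun p : Fin N × Fin d => x (τ p.1, p.2) - y p)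

/-- Potential energy of the `N`-particle Hamiltonian:
`W(x) = g ∑_j V(x_j; ω) + U(x)`. -/
def potW {N d : ℕ} {Ω : Type*} (g : ℝ) (V : (Fin d → ℤ) → Ω → ℝ)
    (U : Conf N d → ℝ) (ω : Ω) (x : Conf N d) : ℝ :=
  g * ∑ j : Fin N, V (fun i => x (j, i)) ω + U x

/-- Action of the full lattice Hamiltonian `H = Δ + W` on a function. -/
noncomputable def hamApply {ι : Type*} [Fintype ι] [DecidableEq ι]
    (W : (ι → ℤ) → ℝ) (Ψ : (ι → ℤ) → ℂ) (x : ι → ℤ) : ℂ :=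
  (∑ y ∈ cube x 1, if l1Norm (y - x) = 1 then Ψ y else 0) + (W x : ℂ) * Ψ x

/-- The scales `L_0, L_{k+1} = ⌊L_k^{3/2}⌋`. -/
noncomputable def scale (L0 : ℕ) : ℕ → ℕ
  | 0 => L0
  | k + 1 => Nat.floor ((scale L0 k : ℝ) ^ ((3 : ℝ) / 2))

/-- Sample mean `ξ_Q` of the random field `V` over `Q`. -/
noncomputable def sampleMean {d : ℕ} {Ω : Type*} (V : (Fin d → ℤ) → Ω → ℝ)
    (Q : Finset (Fin d → ℤ)) (ω : Ω) : ℝ :=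
  (∑ x ∈ Q, V x ω) / Q.card

/-- The σ-algebra `F_{V,Q}` generated by the fluctuations `η_x = V(x) - ξ_Q`, `x ∈ Q`,
together with `V(y)`, `y ∉ Q`. -/
noncomputable def fieldSigma {d : ℕ} {Ω : Type*} [MeasurableSpace Ω]
    (V : (Fin d → ℤ) → Ω → ℝ) (Q : Finset (Fin d → ℤ)) : MeasurableSpace Ω :=
  (⨆ x ∈ Q, MeasurableSpace.comap (fun ω => V x ω - sampleMean V Q ω) inferInstance) ⊔
  (⨆ (y : Fin d → ℤ) (_ : y ∉ Q), MeasurableSpace.comap (V y) inferInstance)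

/-- Condition (CMν): the conditional distribution function of the sample mean `ξ_Q`
given `F_{V,Q}` has continuity modulus `ν_R` for every rectangle `Q` of diameter `≤ R`. -/
def CondMeasCM {d : ℕ} {Ω : Type*} [MeasurableSpace Ω] (μ : Measure Ω)
    (V : (Fin d → ℤ) → Ω → ℝ) (ν : ℕ → ℝ → ℝ) : Prop :=
  (∀ R : ℕ, ∀ t : ℝ, 0 ≤ ν R t) ∧
  (∀ R : ℕ, Filter.Tendsto (ν R) (nhdsWithin 0 (Set.Ioi 0)) (nhds 0)) ∧
  ∀ (R : ℕ) (Q : Finset (Fin d → ℤ)), Q.Nonempty →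
    (∃ a b : Fin d → ℤ, Q = Finset.Icc a b) →
    (∀ x ∈ Q, ∀ y ∈ Q, supNorm (x - y) ≤ R) →
    ∀ t s : ℝ, ∀ᵐ ω ∂μ,
      |MeasureTheory.condExp (fieldSigma V Q) μ
          (Set.indicator {ω' | sampleMean V Q ω' ≤ t} (fun _ => (1 : ℝ))) ω -
       MeasureTheory.condExp (fieldSigma V Q) μ
          (Set.indicator {ω' | sampleMean V Q ω' ≤ s} (fun _ => (1 : ℝ))) ω|
        ≤ ν R |t - s|

/-! If `C_L(0)` is non-singular and `u` lies well inside it, then restricting `HΨ = EΨ` to the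
cube gives `(H_{C_L(0)} - E) Ψ = b`, where `b` collects the values of `Ψ` just outside the cube
and lives on `∂⁻C_L(0)`. Inverting, `Ψ(u) = ∑_y G(u, y; E) b(y)`, and non-singularity bounds
`|G(u, y; E)| ≤ e^{-mL}` on the boundary, so `|Ψ(u)| ≤ poly(L) e^{-mL}`. This tends to `0`,
which is impossible for infinitely many `L` when `Ψ(u) ≠ 0`. -/

open scoped Matrix

section Lattice

variable {ι : Type*} [Fintype ι]

lemma l1Norm_sub_comm (x y : ι → ℤ) : l1Norm (x - y) = l1Norm (y - x) := by
  unfold l1Norm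
  refine Finset.sum_congr rfl fun i _ => ?_
  simp only [Pi.sub_apply]
  omega

lemma supNorm_le_iff (x : ι → ℤ) (n : ℕ) : supNorm x ≤ n ↔ ∀ i, (x i).natAbs ≤ n := by
  simp [supNorm, Finset.sup_le_iff]

lemma supNorm_add_le (x y : ι → ℤ) : supNorm (x + y) ≤ supNorm x + supNorm y := by
  rw [supNorm_le_iff]
  intro i
  have hx := (supNorm_le_iff x _).mp le_rfl i
  have hy := (supNorm_le_iff y _).mp le_rfl i
  simp only [Pi.add_apply]
  omega

lemma supNorm_le_l1Norm (x : ι → ℤ) : supNorm x ≤ l1Norm x :=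
  Finset.sup_le fun i _ =>
    Finset.single_le_sum (f := fun j => (x j).natAbs) (fun _ _ => Nat.zero_le _)
      (Finset.mem_univ i)

variable [DecidableEq ι]

lemma mem_cube_iff (c x : ι → ℤ) (L : ℕ) : x ∈ cube c L ↔ supNorm (x - c) ≤ L := by
  rw [cube, Finset.mem_Icc, supNorm_le_iff]
  simp only [Pi.le_def, Pi.sub_apply, ← forall_and]
  exact forall_congr' fun i => by omega

lemma card_cube (c : ι → ℤ) (L : ℕ) : (cube c L).card = (2 * L + 1) ^ Fintype.card ι := by
  rw [cube, Pi.card_Icc]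
  have hside : ∀ i, (Finset.Icc (c i - L) (c i + L)).card = 2 * L + 1 := fun i => by
    rw [Int.card_Icc]; omega
  simp only [hside, Finset.prod_const, Finset.card_univ]

noncomputable def neighbors (x : ι → ℤ) : Finset (ι → ℤ) :=
  {y ∈ cube x 1 | l1Norm (y - x) = 1}

lemma mem_neighbors_iff {x y : ι → ℤ} : y ∈ neighbors x ↔ l1Norm (y - x) = 1 := by
  rw [neighbors, Finset.mem_filter, mem_cube_iff, and_iff_right_iff_imp]
  exact fun h => h ▸ supNorm_le_l1Norm _

lemma card_neighbors_le (x : ι → ℤ) : (neighbors x).card ≤ 3 ^ Fintype.card ι :=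
  (Finset.card_filter_le _ _).trans (card_cube x 1).le

lemma supNorm_sub_le_of_mem_neighbors {c x y : ι → ℤ} (hy : y ∈ neighbors x) :
    supNorm (y - c) ≤ supNorm (x - c) + 1 := by
  have hyx : supNorm (y - x) ≤ 1 := mem_neighbors_iff.mp hy ▸ supNorm_le_l1Norm _
  have := supNorm_add_le (y - x) (x - c)
  rw [sub_add_sub_cancel] at this
  omega

lemma hamApply_eq_sum_neighbors (W : (ι → ℤ) → ℝ) (Ψ : (ι → ℤ) → ℂ) (x : ι → ℤ) :
    hamApply W Ψ x = ∑ y ∈ neighbors x, Ψ y + W x * Ψ x := by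
  rw [hamApply, neighbors, Finset.sum_filter]

lemma hamMatrix_mulVec_apply (W : (ι → ℤ) → ℝ) (Λ : Finset (ι → ℤ)) (f : (ι → ℤ) → ℂ)
    (x : Λ) :
    (hamMatrix W Λ *ᵥ fun y => f y) x = ∑ y ∈ neighbors x.1 with y ∈ Λ, f y + W x * f x := by
  have hnb : {y ∈ neighbors x.1 | y ∈ Λ} = {y ∈ Λ | l1Norm (x.1 - y) = 1} := by
    ext y
    simp only [Finset.mem_filter, mem_neighbors_iff, l1Norm_sub_comm y]
    exact and_comm
  simp only [Matrix.mulVec, dotProduct, hamMatrix, add_mul, Finset.sum_add_distrib, ite_mul,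
    one_mul, zero_mul, Finset.sum_ite_eq, Finset.mem_univ, if_true]
  rw [hnb, Finset.sum_filter, ← Finset.sum_coe_sort Λ]

lemma hamMatrix_sub_mulVec_of_hamApply_eq {W : (ι → ℤ) → ℝ} {Ψ : (ι → ℤ) → ℂ} {E : ℂ}
    (Λ : Finset (ι → ℤ)) (x : Λ) (heig : hamApply W Ψ x = E * Ψ x) :
    ((hamMatrix W Λ - E • (1 : Matrix Λ Λ ℂ)) *ᵥ fun y => Ψ y) x =
      -∑ y ∈ neighbors x.1 with y ∉ Λ, Ψ y := by
  rw [hamApply_eq_sum_neighbors, ← Finset.sum_filter_add_sum_filter_not _ (· ∈ Λ)] at heig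
  rw [Matrix.sub_mulVec, Pi.sub_apply, hamMatrix_mulVec_apply, Matrix.smul_mulVec,
    Matrix.one_mulVec, Pi.smul_apply, smul_eq_mul]
  linear_combination heig

lemma filter_neighbors_notMem_cube_eq_empty {c x : ι → ℤ} {L : ℕ} (hx : supNorm (x - c) < L) :
    {y ∈ neighbors x | y ∉ cube c L} = ∅ :=
  Finset.filter_false_of_mem fun y hy => not_not.mpr <|
    (mem_cube_iff c y L).mpr ((supNorm_sub_le_of_mem_neighbors hy).trans hx)

lemma mem_cube_succ_of_mem_neighbors {c x y : ι → ℤ} {L : ℕ} (hx : x ∈ cube c L)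
    (hy : y ∈ neighbors x) : y ∈ cube c (L + 1) := by
  rw [mem_cube_iff] at hx ⊢
  exact (supNorm_sub_le_of_mem_neighbors hy).trans (Nat.add_le_add_right hx 1)

end Lattice

lemma isUnit_det_sub_smul_one {n : Type*} [Fintype n] [DecidableEq n] {A : Matrix n n ℂ}
    {z : ℂ} (hA : ¬ IsEV A z) : IsUnit (A - z • 1).det := by
  refine isUnit_iff_ne_zero.mpr fun h0 => hA ?_
  obtain ⟨v, hv, hAv⟩ := Matrix.exists_mulVec_eq_zero_iff.mpr h0
  refine ⟨v, hv, ?_⟩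
  rwa [Matrix.sub_mulVec, Matrix.smul_mulVec, Matrix.one_mulVec, sub_eq_zero] at hAv

lemma eq_sum_green_mul {ι : Type*} [Fintype ι] [DecidableEq ι] {W : (ι → ℤ) → ℝ}
    {Λ : Finset (ι → ℤ)} {E : ℂ} (hE : ¬ IsEV (hamMatrix W Λ) E) (f : (ι → ℤ) → ℂ)
    (x : Λ) :
    f x = ∑ y : Λ,
      green W Λ E x y * ((hamMatrix W Λ - E • (1 : Matrix Λ Λ ℂ)) *ᵥ fun z => f z) y := by
  have hinv := Matrix.nonsing_inv_mul _ (isUnit_det_sub_smul_one hE)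
  have h := congrFun (congrArg (· *ᵥ fun z : Λ => f z) hinv) x
  simp only [← Matrix.mulVec_mulVec, Matrix.one_mulVec] at h
  simp only [green, Finset.coe_mem, dif_pos, Subtype.coe_eta]
  exact h.symm

lemma mul_le_gammaExp {m : ℝ} (hm : 0 ≤ m) (L N : ℕ) : m * L ≤ gammaExp m L N N := by
  rw [gammaExp, Nat.sub_self, zero_add, pow_one]
  have hL : 0 ≤ m * L := by positivity
  have : 0 ≤ (L : ℝ) ^ (-(1 : ℝ) / 4) := by positivity
  nlinarith

lemma natCast_rpow_two_thirds_le (L : ℕ) : (L : ℝ) ^ ((2 : ℝ) / 3) ≤ L := by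
  rcases Nat.eq_zero_or_pos L with rfl | hL
  · simp
  · exact Real.rpow_le_self_of_one_le (by exact_mod_cast hL) (by norm_num)

lemma norm_sum_neighbors_notMem_cube_le {ι : Type*} [Fintype ι] [DecidableEq ι]
    {Ψ : (ι → ℤ) → ℂ} {B : ℝ} {c y : ι → ℤ} {L : ℕ} (hy : y ∈ cube c L) (hB0 : 0 ≤ B)
    (hB : ∀ z ∈ cube c (L + 1), ‖Ψ z‖ ≤ B) :
    ‖∑ z ∈ neighbors y with z ∉ cube c L, Ψ z‖ ≤ 3 ^ Fintype.card ι * B :=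
  calc ‖∑ z ∈ neighbors y with z ∉ cube c L, Ψ z‖
      ≤ ∑ z ∈ neighbors y with z ∉ cube c L, B :=
        (norm_sum_le _ _).trans <| Finset.sum_le_sum fun z hz =>
          hB z (mem_cube_succ_of_mem_neighbors hy (Finset.mem_filter.mp hz).1)
    _ ≤ 3 ^ Fintype.card ι * B := by
        rw [Finset.sum_const, nsmul_eq_mul]
        gcongr
        exact_mod_cast (Finset.card_filter_le _ _).trans (card_neighbors_le _)

lemma norm_le_of_nonSingular {ι : Type*} [Fintype ι] [DecidableEq ι] {N : ℕ}
    {W : (ι → ℤ) → ℝ} {Ψ : (ι → ℤ) → ℂ} {E m B : ℝ} {c x : ι → ℤ} {L : ℕ} (hm : 0 ≤ m)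
    (heig : ∀ x, hamApply W Ψ x = E * Ψ x) (hNS : NonSingular N W E m c L)
    (hx : (supNorm (x - c) : ℝ) ≤ (L : ℝ) ^ ((2 : ℝ) / 3))
    (hB : ∀ z ∈ cube c (L + 1), ‖Ψ z‖ ≤ B) :
    ‖Ψ x‖ ≤ (2 * L + 1) ^ Fintype.card ι * 3 ^ Fintype.card ι * B * Real.exp (-(m * L)) := by
  set Λ := cube c L
  set b : Λ → ℂ := (hamMatrix W Λ - (E : ℂ) • (1 : Matrix Λ Λ ℂ)) *ᵥ fun z => Ψ z
  have hxΛ : x ∈ Λ := (mem_cube_iff c x L).mpr <| by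
    exact_mod_cast hx.trans (natCast_rpow_two_thirds_le L)
  have hB0 : 0 ≤ B :=
    (norm_nonneg _).trans (hB c ((mem_cube_iff c c _).mpr (by simp [supNorm])))
  have hterm : ∀ y : Λ,
      ‖green W Λ E x y * b y‖ ≤ Real.exp (-(m * L)) * (3 ^ Fintype.card ι * B) := by
    intro y
    have hb : b y = -∑ z ∈ neighbors y.1 with z ∉ Λ, Ψ z :=
      hamMatrix_sub_mulVec_of_hamApply_eq Λ y (heig y)
    rcases (((mem_cube_iff c y L).mp y.2).lt_or_eq) with hint | hbdry
    · rw [hb, filter_neighbors_notMem_cube_eq_empty hint]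
      simp only [Finset.sum_empty, neg_zero, mul_zero, norm_zero]
      positivity
    have hG : ‖green W Λ E x y‖ ≤ Real.exp (-(m * L)) :=
      (hNS.2 x hx y hbdry).trans <| Real.exp_le_exp.mpr <| neg_le_neg (mul_le_gammaExp hm L N)
    have hbB : ‖b y‖ ≤ 3 ^ Fintype.card ι * B := by
      rw [hb, norm_neg]
      exact norm_sum_neighbors_notMem_cube_le y.2 hB0 hB
    rw [norm_mul]
    exact mul_le_mul hG hbB (norm_nonneg _) (Real.exp_pos _).le
  calc ‖Ψ x‖ = ‖∑ y : Λ, green W Λ E x y * b y‖ := by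
        rw [← eq_sum_green_mul hNS.1 Ψ ⟨x, hxΛ⟩]
    _ ≤ ∑ _y : Λ, Real.exp (-(m * L)) * (3 ^ Fintype.card ι * B) :=
        (norm_sum_le _ _).trans (Finset.sum_le_sum fun y _ => hterm y)
    _ = _ := by
        rw [Finset.sum_const, Finset.card_univ, Fintype.card_coe, card_cube, nsmul_eq_mul]
        push_cast
        ring

lemma rpow_le_rpow_abs {a b : ℝ} (ha : 1 ≤ a) (hab : a ≤ b) (A : ℝ) : a ^ A ≤ b ^ |A| :=
  calc a ^ A ≤ a ^ |A| := Real.rpow_le_rpow_of_exponent_le ha (le_abs_self A)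
    _ ≤ b ^ |A| := Real.rpow_le_rpow (by linarith) hab (abs_nonneg A)

lemma norm_le_of_poly_bound {ι : Type*} [Fintype ι] [DecidableEq ι] {Ψ : (ι → ℤ) → ℂ}
    {A C₀ : ℝ} (hpoly : ∀ x, ‖Ψ x‖ ≤ C₀ * (1 + (supNorm x : ℝ)) ^ A) {L : ℕ} {z : ι → ℤ}
    (hz : z ∈ cube 0 (L + 1)) : ‖Ψ z‖ ≤ |C₀| * ((L : ℝ) + 2) ^ |A| := by
  have hzL : (supNorm z : ℝ) ≤ L + 1 := by
    exact_mod_cast sub_zero z ▸ (mem_cube_iff 0 z _).mp hz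
  have hpow := rpow_le_rpow_abs (le_add_of_nonneg_right (Nat.cast_nonneg (supNorm z)))
    (by linarith : 1 + (supNorm z : ℝ) ≤ L + 2) A
  calc ‖Ψ z‖ ≤ C₀ * (1 + (supNorm z : ℝ)) ^ A := hpoly z
    _ ≤ |C₀| * (1 + (supNorm z : ℝ)) ^ A := by gcongr; exact le_abs_self C₀
    _ ≤ |C₀| * ((L : ℝ) + 2) ^ |A| := by gcongr

lemma tendsto_poly_mul_exp_neg (k : ℕ) (a : ℝ) {b : ℝ} (hb : 0 < b) :
    Filter.Tendsto (fun L : ℕ => (2 * (L : ℝ) + 1) ^ k * ((L : ℝ) + 2) ^ a * Real.exp (-(b * L)))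
      Filter.atTop (nhds 0) := by
  have hshift : Filter.Tendsto (fun L : ℕ => (L : ℝ) + 2) Filter.atTop Filter.atTop :=
    Filter.tendsto_atTop_add_const_right _ 2 tendsto_natCast_atTop_atTop
  have hdecay := ((tendsto_rpow_mul_exp_neg_mul_atTop_nhds_zero (k + a) b hb).comp
    hshift).const_mul (2 ^ k * Real.exp (2 * b))
  rw [mul_zero] at hdecay
  refine squeeze_zero (fun L => by positivity) (fun L => ?_) hdecay
  have hL : (0 : ℝ) < L + 2 := by positivity
  have hexp : Real.exp (-(b * L)) = Real.exp (2 * b) * Real.exp (-b * (L + 2)) := by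
    rw [← Real.exp_add]; ring_nf
  calc (2 * (L : ℝ) + 1) ^ k * ((L : ℝ) + 2) ^ a * Real.exp (-(b * L))
      ≤ (2 * ((L : ℝ) + 2)) ^ k * ((L : ℝ) + 2) ^ a * Real.exp (-(b * L)) := by
        gcongr; linarith
    _ = _ := by
        simp only [Function.comp, Real.rpow_add hL, Real.rpow_natCast, hexp, mul_pow]
        ring

theorem eventually_singular_at_origin_general (N d : ℕ)
    (m : ℝ) (hm : 0 < m) (W : Conf N d → ℝ)
    (Ψ : Conf N d → ℂ) (E : ℝ) (A C₀ : ℝ)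
    (hpoly : ∀ x : Conf N d, ‖Ψ x‖ ≤ C₀ * (1 + (supNorm x : ℝ)) ^ A)
    (heig : ∀ x : Conf N d, hamApply W Ψ x = (E : ℂ) * Ψ x)
    (u : Conf N d) (hu : Ψ u ≠ 0) :
    {L : ℕ | (supNorm u : ℝ) ≤ (L : ℝ) ^ ((2 : ℝ) / 3) ∧
      NonSingular N W E m (0 : Conf N d) L}.Finite := by
  set n := Fintype.card (Fin N × Fin d)
  have hdecay := (tendsto_poly_mul_exp_neg n |A| hm).const_mul (3 ^ n * |C₀|)
  rw [mul_zero] at hdecay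
  have hsmall := hdecay.eventually_lt_const (norm_pos_iff.mpr hu)
  rw [← Nat.cofinite_eq_atTop] at hsmall
  refine (Filter.eventually_cofinite.mp hsmall).subset fun L ⟨huL, hNS⟩ => not_lt.mpr ?_
  calc ‖Ψ u‖ ≤ (2 * L + 1) ^ n * 3 ^ n * (|C₀| * ((L : ℝ) + 2) ^ |A|) * Real.exp (-(m * L)) :=
        norm_le_of_nonSingular hm.le heig hNS (by simpa using huL)
          fun z hz => norm_le_of_poly_bound hpoly hz
    _ = _ := by ring

/-- A nonzero polynomially bounded generalized eigenfunction forces all sufficiently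
large cubes around the origin to be singular: if `HΨ = EΨ` with `Ψ(u) ≠ 0`, then the set
of `L` with `‖u‖ ≤ L^{1/α}` (`α = 3/2`) such that `C_L(0)` is `(E,m)`-non-singular is
finite. -/
theorem eventually_singular_at_origin (N d : ℕ) (hN : 1 ≤ N) (hd : 1 ≤ d)
    (m : ℝ) (hm : 0 < m) (W : Conf N d → ℝ)
    (Ψ : Conf N d → ℂ) (E : ℝ) (A C₀ : ℝ)
    (hpoly : ∀ x : Conf N d, ‖Ψ x‖ ≤ C₀ * (1 + (supNorm x : ℝ)) ^ A)
    (hne : Ψ ≠ 0)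
    (heig : ∀ x : Conf N d, hamApply W Ψ x = (E : ℂ) * Ψ x)
    (u : Conf N d) (hu : Ψ u ≠ 0) :
    {L : ℕ | (supNorm u : ℝ) ≤ (L : ℝ) ^ ((2 : ℝ) / 3) ∧
      NonSingular N W E m (0 : Conf N d) L}.Finite :=
  eventually_singular_at_origin_general N d m hm W Ψ E A C₀ hpoly heig u hu

end MPLoc
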